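/- arXiv:2009.12870 — 4 statements merged into one kernel-verified Lean document; each statement's English description precedes it below -/
import Mathlib

section
/- Let j ∈ ℕ and let (α_0,…,α_{j+1}) be natural numbers with at least one α_{l₀} ≥ 1 and ∑_{l=0}^{j+1} (l+1) α_l = 2j+6. Set σ_l = (l + 1/2 − 1/(α_l β_l))/(j+2) where β_l = (2j+6)/((l+1)α_l) for each l with α_l ≠ 0. Then ∑_{l : α_l ≠ 0} 1/β_l = 1, α_l β_l > 2 for each such l, and ∑_{l : α_l ≠ 0} σ_l α_l ≤ 2 − 1/(j+2)² < 2. -/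
open Finset

/-- Exponent bookkeeping for the interpolation estimate of a monomial of
`p^{j+1}_{2j+6}(k)`: with `β_l = (2j+6)/((l+1)α_l)` and
`σ_l = (l + 1/2 − 1/(α_l β_l))/(j+2)` for the indices with `α_l ≠ 0`, one has
`∑ 1/β_l = 1`, `α_l β_l > 2`, and `∑ σ_l α_l ≤ 2 − 1/(j+2)² < 2`. -/
theorem stmt_5 (j : ℕ) (α : Fin (j + 2) → ℕ)
    (hpos : ∃ l, 1 ≤ α l)
    (hsum : ∑ l : Fin (j + 2), (l.1 + 1) * α l = 2 * j + 6)
    (β σ : Fin (j + 2) → ℝ)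
    (hβ : ∀ l, α l ≠ 0 → β l = (2 * (j : ℝ) + 6) / (((l.1 : ℝ) + 1) * (α l : ℝ)))
    (hσ : ∀ l, α l ≠ 0 →
      σ l = ((l.1 : ℝ) + 1 / 2 - 1 / ((α l : ℝ) * β l)) / ((j : ℝ) + 2)) :
    (∑ l ∈ univ.filter (fun l => α l ≠ 0), 1 / β l = 1) ∧
    (∀ l, α l ≠ 0 → 2 < (α l : ℝ) * β l) ∧
    (∑ l ∈ univ.filter (fun l => α l ≠ 0), σ l * (α l : ℝ) ≤ 2 - 1 / ((j : ℝ) + 2) ^ 2) ∧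
    (2 - 1 / ((j : ℝ) + 2) ^ 2 < 2) := by
  have hN : (0:ℝ) < 2*(j:ℝ)+6 := by positivity
  have hsumR : ∑ l : Fin (j+2), (((l.1:ℝ)+1) * (α l : ℝ)) = 2*(j:ℝ)+6 := by
    have h := congrArg (fun n : ℕ => (n:ℝ)) hsum
    push_cast at h
    exact h
  have hαβ : ∀ l, α l ≠ 0 → (α l : ℝ) * β l = (2*(j:ℝ)+6) / ((l.1:ℝ)+1) := by
    intro l h
    have hα : (α l : ℝ) ≠ 0 := Nat.cast_ne_zero.2 h
    have hl : ((l.1:ℝ)+1) ≠ 0 := by positivity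
    rw [hβ l h]
    field_simp
  have h2 : ∀ l, α l ≠ 0 → 2 < (α l : ℝ) * β l := by
    intro l h
    rw [hαβ l h, lt_div_iff₀ (by positivity)]
    have hl : (l.1:ℝ) < (j:ℝ) + 2 := by exact_mod_cast l.2
    nlinarith
  have h1 : ∑ l ∈ univ.filter (fun l => α l ≠ 0), 1 / β l = 1 := by
    have he : ∑ l ∈ univ.filter (fun l => α l ≠ 0), 1 / β l
        = ∑ l : Fin (j+2), (((l.1:ℝ)+1) * (α l:ℝ)) / (2*(j:ℝ)+6) := by
      rw [Finset.sum_filter]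
      refine Finset.sum_congr rfl fun l _ => ?_
      by_cases h : α l = 0
      · simp [h]
      · rw [if_pos h, hβ l h, one_div_div]
    rw [he, ← Finset.sum_div, hsumR, div_self hN.ne']
  -- S ≥ 3
  have hSn : 3 ≤ ∑ l : Fin (j+2), α l := by
    by_contra hcon
    push_neg at hcon
    have hle : ∑ l : Fin (j+2), (l.1+1) * α l ≤ ∑ l : Fin (j+2), (j+2) * α l :=
      Finset.sum_le_sum fun l _ => Nat.mul_le_mul_right _ (by have := l.2; omega)
    rw [← Finset.mul_sum, hsum] at hle
    have hS2 : ∑ l : Fin (j+2), α l ≤ 2 := by omega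
    have := Nat.mul_le_mul_left (j+2) hS2
    omega
  have hS : (3:ℝ) ≤ ∑ l : Fin (j+2), (α l : ℝ) := by
    have : ((3:ℕ):ℝ) ≤ ((∑ l : Fin (j+2), α l : ℕ) : ℝ) := Nat.cast_le.2 hSn
    push_cast at this
    exact this
  have hT : ∑ l ∈ univ.filter (fun l => α l ≠ 0), σ l * (α l:ℝ)
      = ((2*(j:ℝ)+6) - (∑ l : Fin (j+2), (α l:ℝ))/2 - 1) / ((j:ℝ)+2) := by
    have he : ∑ l ∈ univ.filter (fun l => α l ≠ 0), σ l * (α l:ℝ)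
        = ∑ l : Fin (j+2), ((((l.1:ℝ)+1)*(α l:ℝ) - (α l:ℝ)/2
            - (((l.1:ℝ)+1)*(α l:ℝ))/(2*(j:ℝ)+6)) / ((j:ℝ)+2)) := by
      rw [Finset.sum_filter]
      refine Finset.sum_congr rfl fun l _ => ?_
      by_cases h : α l = 0
      · simp [h]
      · rw [if_pos h, hσ l h, hαβ l h]
        have hα : (α l : ℝ) ≠ 0 := Nat.cast_ne_zero.2 h
        have hl : ((l.1:ℝ)+1) ≠ 0 := by positivity
        have hj2 : ((j:ℝ)+2) ≠ 0 := by positivity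
        field_simp
        ring
    rw [he, ← Finset.sum_div]
    congr 1
    rw [Finset.sum_sub_distrib, Finset.sum_sub_distrib, ← Finset.sum_div,
      ← Finset.sum_div, hsumR, div_self hN.ne']
  have h3 : ∑ l ∈ univ.filter (fun l => α l ≠ 0), σ l * (α l:ℝ)
      ≤ 2 - 1 / ((j : ℝ) + 2) ^ 2 := by
    rw [hT, div_le_iff₀ (by positivity)]
    have hx : (2:ℝ) ≤ (j:ℝ)+2 := by
      have : (0:ℝ) ≤ (j:ℝ) := Nat.cast_nonneg j
      linarith
    have hx0 : (0:ℝ) < (j:ℝ)+2 := by linarith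
    have hinv : 1/((j:ℝ)+2) ≤ 1/2 := by
      rw [div_le_div_iff₀ hx0 (by norm_num)]; linarith
    have hxx : (1/((j:ℝ)+2)^2) * ((j:ℝ)+2) = 1/((j:ℝ)+2) := by
      field_simp
    have hrhs : (2 - 1/((j:ℝ)+2)^2) * ((j:ℝ)+2) = 2*((j:ℝ)+2) - 1/((j:ℝ)+2) := by
      rw [sub_mul, hxx]
    rw [hrhs]
    linarith
  exact ⟨h1, h2, h3, by
    have : (0:ℝ) < 1 / ((j:ℝ)+2)^2 := by positivity
    linarith⟩
end

section
/- Let j ∈ ℕ and let (α_0,…,α_{j+1}) be natural numbers with ∑_{l=0}^{j+1}(l+1)α_l = 2j+3, at least one α_l ≥ 1, and 2 ≤ ∑_l α_l < 2j+3. Set σ_l = (l+1/2)/(j+2) and a* = 2(∑_l(1−σ_l)α_l)/(2 − ∑_l σ_l α_l). Then ∑_l σ_l α_l < 2 and 2/(j+5) ≤ a* < (2j+3)²/2. -/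
private lemma stmt_8_aux2 (x s : ℝ) (hx : 0 ≤ x) (h2 : 2 ≤ s) :
    2 * (s + 2) ≤ 2 * ((2 * x + 5) * s - (4 * x + 6)) * (x + 5) := by
  nlinarith [mul_nonneg hx (by linarith : (0:ℝ) ≤ s - 2)]

private lemma stmt_8_aux3 (x s : ℝ) (hx : 0 ≤ x) (h2 : 2 ≤ s) (hs : s ≤ 2 * x + 2) :
    2 * ((2 * x + 5) * s - (4 * x + 6)) * 2 < (2 * x + 3) ^ 2 * (s + 2) := by
  nlinarith [mul_nonneg (mul_nonneg hx hx) (by linarith : (0:ℝ) ≤ s - 2),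
    mul_nonneg hx (by linarith : (0:ℝ) ≤ s - 2)]

/-- For natural numbers `α_0,…,α_{j+1}` with `∑(l+1)α_l = 2j+3`, some `α_l ≥ 1`
and `2 ≤ ∑ α_l < 2j+3`, setting `σ_l = (l+1/2)/(j+2)` and
`a* = 2(∑(1−σ_l)α_l)/(2 − ∑σ_l α_l)`, one has `∑ σ_l α_l < 2` and
`2/(j+5) ≤ a* < (2j+3)²/2`. -/
theorem stmt_8 (j : ℕ) (α : Fin (j + 2) → ℕ)
    (hpos : ∃ l, 1 ≤ α l)
    (hsum : ∑ l : Fin (j + 2), (l.1 + 1) * α l = 2 * j + 3)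
    (hlow : 2 ≤ ∑ l : Fin (j + 2), α l)
    (hhigh : ∑ l : Fin (j + 2), α l < 2 * j + 3) :
    (∑ l : Fin (j + 2), (((l.1 : ℝ) + 1 / 2) / ((j : ℝ) + 2)) * (α l : ℝ) < 2) ∧
    (2 / ((j : ℝ) + 5) ≤
      2 * (∑ l : Fin (j + 2), (1 - ((l.1 : ℝ) + 1 / 2) / ((j : ℝ) + 2)) * (α l : ℝ)) /
        (2 - ∑ l : Fin (j + 2), (((l.1 : ℝ) + 1 / 2) / ((j : ℝ) + 2)) * (α l : ℝ))) ∧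
    (2 * (∑ l : Fin (j + 2), (1 - ((l.1 : ℝ) + 1 / 2) / ((j : ℝ) + 2)) * (α l : ℝ)) /
        (2 - ∑ l : Fin (j + 2), (((l.1 : ℝ) + 1 / 2) / ((j : ℝ) + 2)) * (α l : ℝ))
      < (2 * (j : ℝ) + 3) ^ 2 / 2) := by
  set S : ℕ := ∑ l : Fin (j + 2), α l with hS
  have hj2 : (0:ℝ) < (j:ℝ) + 2 := by positivity
  have h1 : ∑ l : Fin (j + 2), ((l.1 : ℝ) + 1) * (α l : ℝ) = 2 * (j:ℝ) + 3 := by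
    have h := congrArg (Nat.cast : ℕ → ℝ) hsum
    push_cast at h
    exact h
  have h2 : ∑ l : Fin (j + 2), (α l : ℝ) = (S:ℝ) := by
    rw [hS]; push_cast; rfl
  have hA : ((j:ℝ) + 2) * ∑ l : Fin (j + 2), (((l.1 : ℝ) + 1 / 2) / ((j : ℝ) + 2)) * (α l : ℝ)
      = (2 * (j:ℝ) + 3) - (S:ℝ) / 2 := by
    rw [Finset.mul_sum]
    have hterm : ∀ l : Fin (j + 2),
        ((j:ℝ) + 2) * ((((l.1 : ℝ) + 1 / 2) / ((j : ℝ) + 2)) * (α l : ℝ))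
        = ((l.1 : ℝ) + 1) * (α l : ℝ) - (1/2) * (α l : ℝ) := by
      intro l; field_simp; ring
    rw [Finset.sum_congr rfl (fun l _ => hterm l), Finset.sum_sub_distrib, h1,
      ← Finset.mul_sum, h2]
    ring
  have hB : ((j:ℝ) + 2) * ∑ l : Fin (j + 2), (1 - ((l.1 : ℝ) + 1 / 2) / ((j : ℝ) + 2)) * (α l : ℝ)
      = ((j:ℝ) + 2) * (S:ℝ) - ((2 * (j:ℝ) + 3) - (S:ℝ) / 2) := by
    rw [Finset.mul_sum]
    have hterm : ∀ l : Fin (j + 2),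
        ((j:ℝ) + 2) * ((1 - ((l.1 : ℝ) + 1 / 2) / ((j : ℝ) + 2)) * (α l : ℝ))
        = ((j:ℝ) + 2) * (α l : ℝ) - (((l.1 : ℝ) + 1) * (α l : ℝ) - (1/2) * (α l : ℝ)) := by
      intro l; field_simp; ring
    rw [Finset.sum_congr rfl (fun l _ => hterm l), Finset.sum_sub_distrib,
      Finset.sum_sub_distrib, h1, ← Finset.mul_sum, ← Finset.mul_sum, h2]
    ring
  set sA := ∑ l : Fin (j + 2), (((l.1 : ℝ) + 1 / 2) / ((j : ℝ) + 2)) * (α l : ℝ) with hsA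
  set sB := ∑ l : Fin (j + 2), (1 - ((l.1 : ℝ) + 1 / 2) / ((j : ℝ) + 2)) * (α l : ℝ) with hsB
  have hAeq : sA = ((2 * (j:ℝ) + 3) - (S:ℝ) / 2) / ((j:ℝ) + 2) := by
    field_simp
    linarith [hA]
  have hBeq : sB = (((j:ℝ) + 2) * (S:ℝ) - ((2 * (j:ℝ) + 3) - (S:ℝ) / 2)) / ((j:ℝ) + 2) := by
    field_simp
    linarith [hB]
  have hSlo : (2:ℝ) ≤ (S:ℝ) := by exact_mod_cast hlow
  have hShi : (S:ℝ) ≤ 2 * (j:ℝ) + 2 := by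
    have : S ≤ 2 * j + 2 := by omega
    exact_mod_cast this
  have hjnn : (0:ℝ) ≤ (j:ℝ) := Nat.cast_nonneg j
  have hden : (0:ℝ) < 2 - sA := by
    rw [hAeq, sub_div' (ne_of_gt hj2)]
    apply div_pos _ hj2
    nlinarith
  have hS2 : (0:ℝ) < (S:ℝ) + 2 := by linarith
  have hval : 2 * sB / (2 - sA)
      = (2 * ((2 * (j:ℝ) + 5) * (S:ℝ) - (4 * (j:ℝ) + 6))) / ((S:ℝ) + 2) := by
    have hne : (2:ℝ) - sA ≠ 0 := ne_of_gt hden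
    rw [hAeq, hBeq]
    rw [hAeq] at hne
    rw [div_eq_div_iff (by rw [hAeq] at hden; exact ne_of_gt hden) (ne_of_gt hS2)]
    field_simp
    ring
  refine ⟨by nlinarith, ?_, ?_⟩
  · rw [hval, div_le_div_iff₀ (by linarith) hS2]
    exact stmt_8_aux2 (j:ℝ) (S:ℝ) hjnn hSlo
  · rw [hval, div_lt_div_iff₀ hS2 (by norm_num : (0:ℝ) < 2)]
    exact stmt_8_aux3 (j:ℝ) (S:ℝ) hjnn hSlo hShi
end

section
/- Let γ_t be a smooth solution of the elastic flow of a curve on [0,1] satisfying Navier boundary conditions γ(t,0)=P, γ(t,1)=Q, k(t,0)=k(t,1)=0 for all t. Then for every n ∈ ℕ and all t, the even-order arclength derivatives of the curvature vanish at the endpoints: ∂_s^{2n} k(t,0) = ∂_s^{2n} k(t,1) = 0. -/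
open Function
noncomputable section
namespace Elastic

variable {E : Type*} [NormedAddCommGroup E] [NormedSpace ℝ E]

/-- joint smoothness -/
def Sm (f : ℝ → ℝ → E) : Prop := ContDiff ℝ (⊤ : ℕ∞) (uncurry f)

/-- partial derivative in the first (time) variable -/
def pt (f : ℝ → ℝ → E) (t x : ℝ) : E := deriv (fun s => f s x) t
/-- partial derivative in the second (space) variable -/
def px (f : ℝ → ℝ → E) (t x : ℝ) : E := deriv (f t) x

lemma Sm.hasFDerivAt {f : ℝ → ℝ → E} (hf : Sm f) (t x : ℝ) :
    HasFDerivAt (uncurry f) (fderiv ℝ (uncurry f) (t, x)) (t, x) :=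
  (hf.differentiable (by simp) (t, x)).hasFDerivAt

lemma hasDerivAt_px {f : ℝ → ℝ → E} (hf : Sm f) (t x : ℝ) :
    HasDerivAt (f t) (fderiv ℝ (uncurry f) (t, x) (0, 1)) x := by
  have h1 : HasDerivAt (fun y : ℝ => ((t, y) : ℝ × ℝ)) (0, 1) x :=
    HasDerivAt.prodMk (hasDerivAt_const x t) (hasDerivAt_id x)
  have := (hf.hasFDerivAt t x).comp_hasDerivAt x h1
  simpa [Function.comp_def] using this

lemma hasDerivAt_pt {f : ℝ → ℝ → E} (hf : Sm f) (t x : ℝ) :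
    HasDerivAt (fun s => f s x) (fderiv ℝ (uncurry f) (t, x) (1, 0)) t := by
  have h1 : HasDerivAt (fun s : ℝ => ((s, x) : ℝ × ℝ)) (1, 0) t :=
    HasDerivAt.prodMk (hasDerivAt_id t) (hasDerivAt_const t x)
  have := (hf.hasFDerivAt t x).comp_hasDerivAt t h1
  simpa [Function.comp_def] using this

lemma px_eq {f : ℝ → ℝ → E} (hf : Sm f) (t x : ℝ) :
    px f t x = fderiv ℝ (uncurry f) (t, x) (0, 1) := (hasDerivAt_px hf t x).deriv

lemma pt_eq {f : ℝ → ℝ → E} (hf : Sm f) (t x : ℝ) :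
    pt f t x = fderiv ℝ (uncurry f) (t, x) (1, 0) := (hasDerivAt_pt hf t x).deriv

lemma Sm.smpx {f : ℝ → ℝ → E} (hf : Sm f) : Sm (px f) := by
  have h : ContDiff ℝ (⊤ : ℕ∞) (fun p : ℝ × ℝ => fderiv ℝ (uncurry f) p (0, 1)) :=
    (hf.fderiv_right (by simp)).clm_apply contDiff_const
  have : uncurry (px f) = fun p : ℝ × ℝ => fderiv ℝ (uncurry f) p (0, 1) := by
    funext p
    exact px_eq hf p.1 p.2
  rw [Sm, this]; exact h

lemma Sm.smpt {f : ℝ → ℝ → E} (hf : Sm f) : Sm (pt f) := by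
  have h : ContDiff ℝ (⊤ : ℕ∞) (fun p : ℝ × ℝ => fderiv ℝ (uncurry f) p (1, 0)) :=
    (hf.fderiv_right (by simp)).clm_apply contDiff_const
  have : uncurry (pt f) = fun p : ℝ × ℝ => fderiv ℝ (uncurry f) p (1, 0) := by
    funext p
    exact pt_eq hf p.1 p.2
  rw [Sm, this]; exact h

lemma schwarz {f : ℝ → ℝ → E} (hf : Sm f) (t x : ℝ) :
    pt (px f) t x = px (pt f) t x := by
  set F := uncurry f with hF
  have hD : ContDiff ℝ (⊤ : ℕ∞) (fderiv ℝ F) := hf.fderiv_right (by simp)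
  have hsym : ∀ v w, fderiv ℝ (fderiv ℝ F) (t, x) v w = fderiv ℝ (fderiv ℝ F) (t, x) w v := by
    have := hf.contDiffAt (x := (t, x)).isSymmSndFDerivAt (by simp only [minSmoothness_of_isRCLikeNormedField]; exact WithTop.coe_le_coe.2 le_top)
    exact this
  have e1 : pt (px f) t x = fderiv ℝ (fderiv ℝ F) (t, x) (1, 0) (0, 1) := by
    have hGd : ∀ s : ℝ, HasDerivAt (fun s' => fderiv ℝ F (s', x)) (fderiv ℝ (fderiv ℝ F) (s, x) (1, 0)) s := by
      intro s
      have h1 : HasDerivAt (fun s' : ℝ => ((s', x) : ℝ × ℝ)) (1, 0) s :=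
        HasDerivAt.prodMk (hasDerivAt_id s) (hasDerivAt_const s x)
      have := ((hD.differentiable (by simp) (s, x)).hasFDerivAt).comp_hasDerivAt s h1
      simpa [Function.comp_def] using this
    have h2 : HasDerivAt (fun s => px f s x) (fderiv ℝ (fderiv ℝ F) (t, x) (1, 0) (0, 1)) t := by
      have := ((ContinuousLinearMap.apply ℝ E ((0, 1) : ℝ × ℝ)).hasFDerivAt ).comp_hasDerivAt t (hGd t)
      have h3 : (⇑((ContinuousLinearMap.apply ℝ E) ((0, 1) : ℝ × ℝ)) ∘ fun s' => fderiv ℝ F (s', x)) = fun s => px f s x := by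
        funext s; exact (px_eq hf s x).symm
      rw [h3] at this; exact this
    exact h2.deriv
  have e2 : px (pt f) t x = fderiv ℝ (fderiv ℝ F) (t, x) (0, 1) (1, 0) := by
    have hGd : ∀ y : ℝ, HasDerivAt (fun y' => fderiv ℝ F (t, y')) (fderiv ℝ (fderiv ℝ F) (t, y) (0, 1)) y := by
      intro y
      have h1 : HasDerivAt (fun y' : ℝ => ((t, y') : ℝ × ℝ)) (0, 1) y :=
        HasDerivAt.prodMk (hasDerivAt_const y t) (hasDerivAt_id y)
      have := ((hD.differentiable (by simp) (t, y)).hasFDerivAt).comp_hasDerivAt y h1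
      simpa [Function.comp_def] using this
    have h2 : HasDerivAt (fun y => pt f t y) (fderiv ℝ (fderiv ℝ F) (t, x) (0, 1) (1, 0)) x := by
      have := ((ContinuousLinearMap.apply ℝ E ((1, 0) : ℝ × ℝ)).hasFDerivAt).comp_hasDerivAt x (hGd x)
      have h3 : (⇑((ContinuousLinearMap.apply ℝ E) ((1, 0) : ℝ × ℝ)) ∘ fun y' => fderiv ℝ F (t, y')) = fun y => pt f t y := by
        funext y; exact (pt_eq hf t y).symm
      rw [h3] at this; exact this
    exact h2.deriv
  rw [e1, e2, hsym]


-- algebra closure lemmas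
lemma Sm.add {f g : ℝ → ℝ → E} (hf : Sm f) (hg : Sm g) : Sm (fun t x => f t x + g t x) :=
  ContDiff.add hf hg

lemma Sm.mulC {f g : ℝ → ℝ → ℂ} (hf : Sm f) (hg : Sm g) : Sm (fun t x => f t x * g t x) :=
  ContDiff.mul hf hg

lemma Sm.mulR {f g : ℝ → ℝ → ℝ} (hf : Sm f) (hg : Sm g) : Sm (fun t x => f t x * g t x) :=
  ContDiff.mul hf hg

lemma Sm.conj {f : ℝ → ℝ → ℂ} (hf : Sm f) : Sm (fun t x => (starRingEnd ℂ) (f t x)) := by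
  have : ContDiff ℝ (⊤ : ℕ∞) (fun z : ℂ => (starRingEnd ℂ) z) :=
    Complex.conjCLE.toContinuousLinearMap.contDiff
  exact this.comp hf

lemma Sm.im {f : ℝ → ℝ → ℂ} (hf : Sm f) : Sm (fun t x => (f t x).im) :=
  Complex.imCLM.contDiff.comp hf

lemma Sm.re {f : ℝ → ℝ → ℂ} (hf : Sm f) : Sm (fun t x => (f t x).re) :=
  Complex.reCLM.contDiff.comp hf

lemma Sm.oC {f : ℝ → ℝ → ℝ} (hf : Sm f) : Sm (fun t x => (f t x : ℂ)) :=
  Complex.ofRealCLM.contDiff.comp hf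

lemma Sm.inv {f : ℝ → ℝ → ℝ} (hf : Sm f) (h0 : ∀ t x, f t x ≠ 0) :
    Sm (fun t x => (f t x)⁻¹) := ContDiff.inv hf (fun p => h0 p.1 p.2)

/-- derivative of the norm (= abs) of a complex-valued function of a real variable -/
lemma hasDerivAt_norm {g : ℝ → ℂ} {g' : ℂ} {s : ℝ} (hg : HasDerivAt g g' s) (h0 : g s ≠ 0) :
    HasDerivAt (fun u => ‖g u‖) ((((starRingEnd ℂ) (g s)) * g').re / ‖g s‖) s := by
  have hsq : HasDerivAt (fun u => Complex.normSq (g u))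
      (2 * (((starRingEnd ℂ) (g s)) * g').re) s := by
    have hre : HasDerivAt (fun u => (g u).re) g'.re s :=
      Complex.reCLM.hasFDerivAt.comp_hasDerivAt s hg
    have him : HasDerivAt (fun u => (g u).im) g'.im s :=
      Complex.imCLM.hasFDerivAt.comp_hasDerivAt s hg
    have h1 : HasDerivAt (fun u => (g u).re * (g u).re + (g u).im * (g u).im)
        (g'.re * (g s).re + (g s).re * g'.re + (g'.im * (g s).im + (g s).im * g'.im)) s :=
      (hre.mul hre).add (him.mul him)
    have : (fun u => Complex.normSq (g u)) =
        fun u => (g u).re * (g u).re + (g u).im * (g u).im := by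
      funext u; simp [Complex.normSq_apply]
    rw [this]
    convert h1 using 1
    simp [Complex.mul_re]
    ring
  have hne : Complex.normSq (g s) ≠ 0 := by
    simpa [Complex.normSq_eq_zero] using h0
  have hsqrt := (Real.hasDerivAt_sqrt hne).comp s hsq
  have hfun : (Real.sqrt ∘ fun u => Complex.normSq (g u)) = fun u => ‖g u‖ := by
    funext u
    rw [Function.comp_apply, Complex.norm_def]
  rw [hfun] at hsqrt
  refine hsqrt.congr_deriv ?_
  rw [← Complex.norm_def]
  field_simp

lemma Sm.hdx {f : ℝ → ℝ → E} (hf : Sm f) (t x : ℝ) : HasDerivAt (f t) (px f t x) x := by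
  rw [show px f t x = _ from px_eq hf t x]; exact hasDerivAt_px hf t x

lemma Sm.hdt {f : ℝ → ℝ → E} (hf : Sm f) (t x : ℝ) :
    HasDerivAt (fun s => f s x) (pt f t x) t := by
  rw [show pt f t x = _ from pt_eq hf t x]; exact hasDerivAt_pt hf t x

structure Setting where
  μ : ℝ
  γ : ℝ → ℝ → ℂ
  τ : ℝ → ℝ → ℂ
  k : ℝ → ℝ → ℝ
  V : ℝ → ℝ → ℝ
  T : ℝ → ℝ → ℝ
  hγ : Sm γ
  hreg : ∀ t x, px γ t x ≠ 0
  hτ : ∀ t x, τ t x = (‖px γ t x‖⁻¹ : ℝ) • px γ t x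
  hcurv : ∀ t x, (‖px γ t x‖⁻¹ : ℝ) • px τ t x = k t x • (Complex.I * τ t x)
  hVdef : ∀ t x, V t x = -2 * (‖px γ t x‖⁻¹ *
      px (fun t' y => ‖px γ t' y‖⁻¹ * px k t' y) t x) - (k t x) ^ 3 + μ * k t x
  hmotion : ∀ t x, pt γ t x = V t x • (Complex.I * τ t x) + T t x • τ t x

namespace Setting

variable (S : Setting)

def g1 : ℝ → ℝ → ℂ := px S.γ
def e : ℝ → ℝ → ℝ := fun t x => ‖S.g1 t x‖
def ρ : ℝ → ℝ → ℝ := fun t x => (S.e t x)⁻¹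
def Ds (f : ℝ → ℝ → ℝ) : ℝ → ℝ → ℝ := fun t x => S.ρ t x * px f t x

lemma sm_g1 : Sm S.g1 := S.hγ.smpx

lemma epos (t x : ℝ) : 0 < S.e t x := norm_pos_iff.2 (S.hreg t x)

lemma ene (t x : ℝ) : S.e t x ≠ 0 := (S.epos t x).ne'

lemma sm_e : Sm S.e := by
  rw [Sm, contDiff_iff_contDiffAt]
  intro p
  exact ContDiffAt.norm ℝ ((S.sm_g1).contDiffAt) (S.hreg p.1 p.2)

lemma sm_ρ : Sm S.ρ := Sm.inv S.sm_e S.ene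

lemma ρpos (t x : ℝ) : 0 < S.ρ t x := inv_pos.2 (S.epos t x)

lemma ρe (t x : ℝ) : S.ρ t x * S.e t x = 1 := inv_mul_cancel₀ (S.ene t x)

lemma τ_eq (t x : ℝ) : S.τ t x = (S.ρ t x : ℂ) * S.g1 t x := by
  rw [S.hτ t x, Complex.real_smul]; rfl

lemma sm_τ : Sm S.τ := by
  have h : uncurry S.τ = fun p : ℝ × ℝ => (S.ρ p.1 p.2 : ℂ) * S.g1 p.1 p.2 := by
    funext p; exact S.τ_eq p.1 p.2
  rw [Sm, h]
  exact (Sm.mulC S.sm_ρ.oC S.sm_g1 : Sm fun t x => (S.ρ t x : ℂ) * S.g1 t x)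

lemma norm_τ (t x : ℝ) : ‖S.τ t x‖ = 1 := by
  rw [S.τ_eq, norm_mul, Complex.norm_real, Real.norm_eq_abs, abs_of_pos (S.ρpos t x)]
  exact S.ρe t x

lemma normSq_τ (t x : ℝ) : (starRingEnd ℂ) (S.τ t x) * S.τ t x = 1 := by
  rw [Complex.conj_mul']
  norm_cast
  rw [S.norm_τ]
  norm_num

lemma ρ_inv (t x : ℝ) : (S.ρ t x)⁻¹ = S.e t x := inv_inv _

lemma g1_eq (t x : ℝ) : S.g1 t x = (S.e t x : ℂ) * S.τ t x := by
  rw [S.τ_eq, ← mul_assoc]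
  norm_cast
  rw [mul_comm (S.e t x) (S.ρ t x), S.ρe t x]
  simp

/-- curvature relation in multiplied form -/
lemma pxτ_eq (t x : ℝ) :
    px S.τ t x = (S.k t x * S.e t x : ℂ) * (Complex.I * S.τ t x) := by
  have h := S.hcurv t x
  rw [Complex.real_smul, Complex.real_smul] at h
  have he : (‖px S.γ t x‖⁻¹ : ℝ) = S.ρ t x := rfl
  rw [he] at h
  have hρ : (S.ρ t x : ℂ) ≠ 0 := by
    exact_mod_cast (S.ρpos t x).ne'
  have h2 : px S.τ t x = (S.ρ t x : ℂ)⁻¹ * ((S.k t x : ℂ) * (Complex.I * S.τ t x)) := by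
    rw [← h, ← mul_assoc, inv_mul_cancel₀ hρ, one_mul]
  rw [h2]
  have h3 : ((S.ρ t x : ℂ))⁻¹ = (S.e t x : ℂ) := by
    norm_cast
    exact S.ρ_inv t x
  rw [h3]; push_cast; ring

lemma k_eq (t x : ℝ) :
    S.k t x = S.ρ t x * ((starRingEnd ℂ) (S.τ t x) * px S.τ t x).im := by
  rw [S.pxτ_eq]
  have h : (starRingEnd ℂ) (S.τ t x) * ((S.k t x * S.e t x : ℂ) * (Complex.I * S.τ t x)) =
      (S.k t x * S.e t x : ℂ) * Complex.I * ((starRingEnd ℂ) (S.τ t x) * S.τ t x) := by ring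
  rw [h, S.normSq_τ, mul_one]
  simp [Complex.mul_im]
  rw [mul_comm (S.ρ t x), mul_assoc, mul_comm (S.e t x) (S.ρ t x), S.ρe, mul_one]

lemma sm_k : Sm S.k := by
  have h : S.k = fun t x => S.ρ t x * ((starRingEnd ℂ) (S.τ t x) * px S.τ t x).im := by
    funext t x; exact S.k_eq t x
  rw [show S.k = _ from h]
  exact Sm.mulR S.sm_ρ ((S.sm_τ.conj.mulC S.sm_τ.smpx).im)

/-- motion law in multiplied form -/
lemma ptγ_eq (t x : ℝ) :
    pt S.γ t x = (S.V t x * Complex.I + S.T t x : ℂ) * S.τ t x := by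
  rw [S.hmotion t x, Complex.real_smul, Complex.real_smul]; ring

lemma key (t x : ℝ) : (starRingEnd ℂ) (S.τ t x) * pt S.γ t x
    = S.V t x * Complex.I + S.T t x := by
  rw [S.ptγ_eq]
  have h : (starRingEnd ℂ) (S.τ t x) * (((S.V t x : ℂ) * Complex.I + (S.T t x : ℂ)) * S.τ t x)
      = ((S.V t x : ℂ) * Complex.I + (S.T t x : ℂ)) * ((starRingEnd ℂ) (S.τ t x) * S.τ t x) := by
    ring
  rw [h, S.normSq_τ, mul_one]

lemma T_eq (t x : ℝ) : S.T t x = ((starRingEnd ℂ) (S.τ t x) * pt S.γ t x).re := by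
  rw [S.key]; simp

lemma V_eq (t x : ℝ) : S.V t x = ((starRingEnd ℂ) (S.τ t x) * pt S.γ t x).im := by
  rw [S.key]; simp

lemma sm_T : Sm S.T := by
  have h : S.T = fun t x => ((starRingEnd ℂ) (S.τ t x) * pt S.γ t x).re := by
    funext t x; exact S.T_eq t x
  rw [show S.T = _ from h]
  exact (S.sm_τ.conj.mulC S.hγ.smpt).re

lemma sm_V : Sm S.V := by
  have h : S.V = fun t x => ((starRingEnd ℂ) (S.τ t x) * pt S.γ t x).im := by
    funext t x; exact S.V_eq t x
  rw [show S.V = _ from h]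
  exact (S.sm_τ.conj.mulC S.hγ.smpt).im


lemma sm_Ds {f : ℝ → ℝ → ℝ} (hf : Sm f) : Sm (S.Ds f) := Sm.mulR S.sm_ρ hf.smpx

lemma Ds_eq (f : ℝ → ℝ → ℝ) (t x : ℝ) : S.Ds f t x = S.ρ t x * px f t x := rfl

lemma hV' (t x : ℝ) :
    S.V t x = -2 * S.Ds (S.Ds S.k) t x - S.k t x ^ 3 + S.μ * S.k t x := S.hVdef t x

lemma endpoint_vanish (x0 : ℝ) (c : ℂ) (hc : ∀ t, S.γ t x0 = c) (t : ℝ) :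
    S.V t x0 = 0 ∧ S.T t x0 = 0 := by
  have h : pt S.γ t x0 = 0 := by
    have h2 : (fun s => S.γ s x0) = fun _ => c := funext hc
    show deriv (fun s => S.γ s x0) t = 0
    rw [h2, deriv_const]
  have hT := S.T_eq t x0
  have hV := S.V_eq t x0
  rw [h, mul_zero] at hT hV
  simp at hT hV
  exact ⟨hV, hT⟩

lemma pt_g1 (t x : ℝ) : pt S.g1 t x = px (pt S.γ) t x := schwarz S.hγ t x

lemma pxW (t x : ℝ) : px (pt S.γ) t x =
    (((px S.V t x : ℝ) : ℂ) * Complex.I + px S.T t x) * S.τ t x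
      + ((S.V t x : ℂ) * Complex.I + S.T t x) * px S.τ t x := by
  have hfun : (pt S.γ) t = fun y => ((S.V t y : ℂ) * Complex.I + S.T t y) * S.τ t y := by
    funext y; exact S.ptγ_eq t y
  have hVd : HasDerivAt (fun y => (S.V t y : ℂ)) (((px S.V t x : ℝ) : ℂ)) x :=
    Complex.ofRealCLM.hasFDerivAt.comp_hasDerivAt x (S.sm_V.hdx t x)
  have hTd : HasDerivAt (fun y => (S.T t y : ℂ)) (((px S.T t x : ℝ) : ℂ)) x :=
    Complex.ofRealCLM.hasFDerivAt.comp_hasDerivAt x (S.sm_T.hdx t x)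
  have hA : HasDerivAt (fun y => (S.V t y : ℂ) * Complex.I + (S.T t y : ℂ))
      (((px S.V t x : ℝ) : ℂ) * Complex.I + ((px S.T t x : ℝ) : ℂ)) x :=
    (hVd.mul_const Complex.I).add hTd
  have hd := hA.mul (S.sm_τ.hdx t x)
  show deriv ((pt S.γ) t) x = _
  rw [hfun]
  exact hd.deriv

lemma conjτ_pxτ (t x : ℝ) : (starRingEnd ℂ) (S.τ t x) * px S.τ t x
    = (S.k t x * S.e t x : ℂ) * Complex.I := by
  rw [S.pxτ_eq]
  have h : (starRingEnd ℂ) (S.τ t x) * ((S.k t x * S.e t x : ℂ) * (Complex.I * S.τ t x))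
      = (S.k t x * S.e t x : ℂ) * Complex.I * ((starRingEnd ℂ) (S.τ t x) * S.τ t x) := by ring
  rw [h, S.normSq_τ, mul_one]

lemma conjτ_pxptγ (t x : ℝ) : (starRingEnd ℂ) (S.τ t x) * px (pt S.γ) t x
    = ((px S.T t x - S.k t x * S.e t x * S.V t x : ℝ) : ℂ)
      + ((px S.V t x + S.k t x * S.e t x * S.T t x : ℝ) : ℂ) * Complex.I := by
  rw [S.pxW]
  have h : (starRingEnd ℂ) (S.τ t x) *
      ((((px S.V t x : ℝ) : ℂ) * Complex.I + px S.T t x) * S.τ t x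
        + ((S.V t x : ℂ) * Complex.I + S.T t x) * px S.τ t x)
      = (((px S.V t x : ℝ) : ℂ) * Complex.I + px S.T t x) * ((starRingEnd ℂ) (S.τ t x) * S.τ t x)
        + ((S.V t x : ℂ) * Complex.I + S.T t x) * ((starRingEnd ℂ) (S.τ t x) * px S.τ t x) := by
    ring
  rw [h, S.normSq_τ, S.conjτ_pxτ, mul_one]
  push_cast
  linear_combination ((S.V t x : ℂ) * (S.k t x * S.e t x)) * Complex.I_sq

lemma pt_e (t x : ℝ) : pt S.e t x = px S.T t x - S.k t x * S.V t x * S.e t x := by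
  have hd : HasDerivAt (fun s => S.e s x)
      (((starRingEnd ℂ) (S.g1 t x) * pt S.g1 t x).re / S.e t x) t :=
    hasDerivAt_norm (S.sm_g1.hdt t x) (S.hreg t x)
  have h1 : pt S.e t x = ((starRingEnd ℂ) (S.g1 t x) * pt S.g1 t x).re / S.e t x := hd.deriv
  rw [h1, S.pt_g1]
  have h2 : (starRingEnd ℂ) (S.g1 t x) * px (pt S.γ) t x
      = (S.e t x : ℂ) * ((starRingEnd ℂ) (S.τ t x) * px (pt S.γ) t x) := by
    rw [S.g1_eq, map_mul]
    have : (starRingEnd ℂ) ((S.e t x : ℂ)) = (S.e t x : ℂ) := Complex.conj_ofReal _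
    rw [this]; ring
  rw [h2, S.conjτ_pxptγ]
  have h3 : ((S.e t x : ℂ) * (((px S.T t x - S.k t x * S.e t x * S.V t x : ℝ) : ℂ)
      + ((px S.V t x + S.k t x * S.e t x * S.T t x : ℝ) : ℂ) * Complex.I)).re
      = S.e t x * (px S.T t x - S.k t x * S.e t x * S.V t x) := by
    simp [Complex.add_re, Complex.mul_re, Complex.ofReal_re, Complex.ofReal_im]
  rw [h3]
  rw [mul_comm (S.e t x), mul_div_assoc, div_self (S.ene t x), mul_one]
  ring

lemma pt_ρ (t x : ℝ) : pt S.ρ t x = S.ρ t x * (S.k t x * S.V t x - S.Ds S.T t x) := by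
  have hd : HasDerivAt (fun s => (S.e s x)⁻¹) (-(pt S.e t x) / (S.e t x) ^ 2) t :=
    (S.sm_e.hdt t x).inv (S.ene t x)
  have h1 : pt S.ρ t x = -(pt S.e t x) / (S.e t x) ^ 2 := hd.deriv
  rw [h1, S.pt_e, S.Ds_eq]
  show _ = (S.e t x)⁻¹ * (S.k t x * S.V t x - (S.e t x)⁻¹ * px S.T t x)
  have he := S.ene t x
  field_simp
  ring_nf
  try exact Or.inl trivial

def β (S : Setting) : ℝ → ℝ → ℝ := fun t x => S.Ds S.V t x + S.k t x * S.T t x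

lemma sm_β : Sm S.β := Sm.add (S.sm_Ds S.sm_V) (Sm.mulR S.sm_k S.sm_T)

lemma coe_ρe (t x : ℝ) : (S.ρ t x : ℂ) * (S.e t x : ℂ) = 1 := by
  norm_cast
  exact_mod_cast S.ρe t x

lemma pt_τ (t x : ℝ) : pt S.τ t x = ((S.β t x : ℝ) : ℂ) * Complex.I * S.τ t x := by
  have hfun : (fun s => S.τ s x) = fun s => (S.ρ s x : ℂ) * S.g1 s x := by
    funext s; exact S.τ_eq s x
  have hρd : HasDerivAt (fun s => (S.ρ s x : ℂ)) ((pt S.ρ t x : ℝ) : ℂ) t :=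
    Complex.ofRealCLM.hasFDerivAt.comp_hasDerivAt t (S.sm_ρ.hdt t x)
  have hd := hρd.mul (S.sm_g1.hdt t x)
  have h1 : pt S.τ t x = ((pt S.ρ t x : ℝ) : ℂ) * S.g1 t x + (S.ρ t x : ℂ) * pt S.g1 t x := by
    show deriv (fun s => S.τ s x) t = _
    rw [hfun]; exact hd.deriv
  rw [h1, S.pt_g1, S.pxW, S.pxτ_eq, S.g1_eq, S.pt_ρ]
  show _ = ((S.Ds S.V t x + S.k t x * S.T t x : ℝ) : ℂ) * Complex.I * S.τ t x
  rw [S.Ds_eq S.V, S.Ds_eq S.T]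
  push_cast
  linear_combination
    (((S.k t x : ℂ) * (S.V t x : ℂ) * ((S.ρ t x : ℂ) * (S.e t x : ℂ))) * S.τ t x) * Complex.I_sq
    + (((S.k t x : ℂ) * (S.T t x : ℂ) * Complex.I
        - (S.ρ t x : ℂ) * ((px S.T t x : ℝ) : ℂ)) * S.τ t x) * (S.coe_ρe t x)

def α (S : Setting) : ℝ → ℝ → ℂ := fun t x => (starRingEnd ℂ) (S.τ t x) * px S.τ t x

lemma sm_α : Sm S.α := S.sm_τ.conj.mulC S.sm_τ.smpx

lemma α_eq (t x : ℝ) : S.α t x = ((S.k t x * S.e t x : ℝ) : ℂ) * Complex.I := by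
  have h := S.conjτ_pxτ t x
  rw [α] at *
  rw [h]; push_cast; ring

lemma px_ptτ (t x : ℝ) : px (pt S.τ) t x =
    ((px S.β t x : ℝ) : ℂ) * Complex.I * S.τ t x
      + ((S.β t x : ℝ) : ℂ) * Complex.I * px S.τ t x := by
  have hfun : (pt S.τ) t = fun y => ((S.β t y : ℝ) : ℂ) * Complex.I * S.τ t y := by
    funext y; exact S.pt_τ t y
  have hβd : HasDerivAt (fun y => (S.β t y : ℂ)) ((px S.β t x : ℝ) : ℂ) x :=
    Complex.ofRealCLM.hasFDerivAt.comp_hasDerivAt x (S.sm_β.hdx t x)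
  have hd := (hβd.mul_const Complex.I).mul (S.sm_τ.hdx t x)
  show deriv ((pt S.τ) t) x = _
  rw [hfun]; exact hd.deriv

lemma pt_α (t x : ℝ) : pt S.α t x = ((px S.β t x : ℝ) : ℂ) * Complex.I := by
  have hconj : HasDerivAt (fun s => (starRingEnd ℂ) (S.τ s x))
      ((starRingEnd ℂ) (pt S.τ t x)) t := by
    have := Complex.conjCLE.toContinuousLinearMap.hasFDerivAt.comp_hasDerivAt t
      (S.sm_τ.hdt t x)
    simpa [Function.comp_def] using this
  have hd := hconj.mul ((S.sm_τ.smpx).hdt t x)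
  have h1 : pt S.α t x = (starRingEnd ℂ) (pt S.τ t x) * px S.τ t x
      + (starRingEnd ℂ) (S.τ t x) * pt (px S.τ) t x := by
    show deriv (fun s => S.α s x) t = _
    rw [show (fun s => S.α s x) = fun s => (starRingEnd ℂ) (S.τ s x) * px S.τ s x from rfl]
    exact hd.deriv
  rw [h1, schwarz S.sm_τ t x, S.px_ptτ, S.pt_τ, S.pxτ_eq]
  simp only [map_mul, Complex.conj_ofReal, Complex.conj_I]
  push_cast
  linear_combination (((px S.β t x : ℝ) : ℂ) * Complex.I) * (S.normSq_τ t x)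

lemma pt_k (t x : ℝ) : pt S.k t x =
    S.Ds (S.Ds S.V) t x + S.k t x ^ 2 * S.V t x + S.T t x * S.Ds S.k t x := by
  have hfun : (fun s => S.k s x) = fun s => S.ρ s x * (S.α s x).im := by
    funext s; exact S.k_eq s x
  have him : HasDerivAt (fun s => (S.α s x).im) ((pt S.α t x).im) t :=
    Complex.imCLM.hasFDerivAt.comp_hasDerivAt t (S.sm_α.hdt t x)
  have hd := (S.sm_ρ.hdt t x).mul him
  have h1 : pt S.k t x = pt S.ρ t x * (S.α t x).im + S.ρ t x * (pt S.α t x).im := by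
    show deriv (fun s => S.k s x) t = _
    rw [hfun]; exact hd.deriv
  have hβx : px S.β t x = px (S.Ds S.V) t x
      + (px S.k t x * S.T t x + S.k t x * px S.T t x) := by
    have hb : HasDerivAt (S.β t) (px (S.Ds S.V) t x
        + (px S.k t x * S.T t x + S.k t x * px S.T t x)) x :=
      ((S.sm_Ds S.sm_V).hdx t x).add ((S.sm_k.hdx t x).mul (S.sm_T.hdx t x))
    exact hb.deriv
  rw [h1, S.pt_ρ, S.α_eq, S.pt_α]
  simp only [Complex.mul_im, Complex.I_im, Complex.I_re, Complex.ofReal_re,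
    Complex.ofReal_im, mul_one, mul_zero, zero_mul, add_zero, zero_add]
  rw [hβx, S.Ds_eq (S.Ds S.V), S.Ds_eq S.T, S.Ds_eq S.k]
  linear_combination (S.k t x ^ 2 * S.V t x - S.k t x * (S.ρ t x * px S.T t x)) * (S.ρe t x)

lemma pt_Ds {f : ℝ → ℝ → ℝ} (hf : Sm f) (t x : ℝ) :
    pt (S.Ds f) t x = S.Ds (pt f) t x
      + (S.k t x * S.V t x - S.Ds S.T t x) * S.Ds f t x := by
  have hd := (S.sm_ρ.hdt t x).mul ((hf.smpx).hdt t x)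
  have h1 : pt (S.Ds f) t x = pt S.ρ t x * px f t x + S.ρ t x * pt (px f) t x := by
    show deriv (fun s => S.Ds f s x) t = _
    rw [show (fun s => S.Ds f s x) = fun s => S.ρ s x * px f s x from rfl]; exact hd.deriv
  rw [h1, schwarz hf t x, S.pt_ρ]
  rw [S.Ds_eq (pt f), S.Ds_eq f]
  ring

lemma Ds_add {f g : ℝ → ℝ → ℝ} (hf : Sm f) (hg : Sm g) (t x : ℝ) :
    S.Ds (fun t x => f t x + g t x) t x = S.Ds f t x + S.Ds g t x := by
  have hd := (hf.hdx t x).add (hg.hdx t x)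
  rw [S.Ds_eq, S.Ds_eq, S.Ds_eq]
  rw [show px (fun t x => f t x + g t x) t x = px f t x + px g t x from hd.deriv]
  ring

lemma Ds_mul {f g : ℝ → ℝ → ℝ} (hf : Sm f) (hg : Sm g) (t x : ℝ) :
    S.Ds (fun t x => f t x * g t x) t x = S.Ds f t x * g t x + f t x * S.Ds g t x := by
  have hd := (hf.hdx t x).mul (hg.hdx t x)
  rw [S.Ds_eq, S.Ds_eq, S.Ds_eq]
  rw [show px (fun t x => f t x * g t x) t x = px f t x * g t x + f t x * px g t x from hd.deriv]
  ring

lemma Ds_smul (c : ℝ) {f : ℝ → ℝ → ℝ} (hf : Sm f) (t x : ℝ) :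
    S.Ds (fun t x => c * f t x) t x = c * S.Ds f t x := by
  have hd := (hf.hdx t x).const_mul c
  rw [S.Ds_eq, S.Ds_eq]
  rw [show px (fun t x => c * f t x) t x = c * px f t x from hd.deriv]
  ring

end Setting

/-- iterated arclength derivative of curvature -/
def Setting.Dk (S : Setting) : ℕ → ℝ → ℝ → ℝ
  | 0 => S.k
  | n + 1 => S.Ds (S.Dk n)

/-- monomials: products of `d` factors `Dk cᵢ` of total weight `Σ (cᵢ+1) = w`,
times real constants -/
inductive Setting.M (S : Setting) : ℕ → ℕ → (ℝ → ℝ → ℝ) → Prop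
  | base (c : ℕ) : Setting.M S 1 (c + 1) (S.Dk c)
  | smul (r : ℝ) {d w : ℕ} {f : ℝ → ℝ → ℝ} : Setting.M S d w f →
      Setting.M S d w (fun t x => r * f t x)
  | mul {d w d' w' : ℕ} {f g : ℝ → ℝ → ℝ} : Setting.M S d w f → Setting.M S d' w' g →
      Setting.M S (d + d') (w + w') (fun t x => f t x * g t x)

/-- sums of monomials of fixed degree `d` and weight `w` -/
inductive Setting.SumMd (S : Setting) (d w : ℕ) : (ℝ → ℝ → ℝ) → Prop
  | zero : Setting.SumMd S d w (fun _ _ => 0)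
  | of {f : ℝ → ℝ → ℝ} : Setting.M S d w f → Setting.SumMd S d w f
  | add {f g : ℝ → ℝ → ℝ} : Setting.SumMd S d w f → Setting.SumMd S d w g →
      Setting.SumMd S d w (fun t x => f t x + g t x)

/-- sums of monomials of weight `w` and degree at least 3 -/
inductive Setting.SumM (S : Setting) (w : ℕ) : (ℝ → ℝ → ℝ) → Prop
  | zero : Setting.SumM S w (fun _ _ => 0)
  | of {d : ℕ} {f : ℝ → ℝ → ℝ} : Setting.M S d w f → 3 ≤ d → Setting.SumM S w f
  | add {f g : ℝ → ℝ → ℝ} : Setting.SumM S w f → Setting.SumM S w g →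
      Setting.SumM S w (fun t x => f t x + g t x)

namespace Setting

variable (S : Setting)

lemma sm_Dk (n : ℕ) : Sm (S.Dk n) := by
  induction n with
  | zero => exact S.sm_k
  | succ m ih => exact S.sm_Ds ih

variable {S}

lemma M.sm {d w : ℕ} {f : ℝ → ℝ → ℝ} (h : S.M d w f) : Sm f := by
  induction h with
  | base c => exact S.sm_Dk c
  | smul r hf ih => exact Sm.mulR contDiff_const ih
  | mul hf hg ihf ihg => exact Sm.mulR ihf ihg

lemma SumMd.sm {d w : ℕ} {f : ℝ → ℝ → ℝ} (h : S.SumMd d w f) : Sm f := by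
  induction h with
  | zero => exact contDiff_const
  | of hf => exact hf.sm
  | add hf hg ihf ihg => exact Sm.add ihf ihg

lemma SumM.sm {w : ℕ} {f : ℝ → ℝ → ℝ} (h : S.SumM w f) : Sm f := by
  induction h with
  | zero => exact contDiff_const
  | of hf _ => exact hf.sm
  | add hf hg ihf ihg => exact Sm.add ihf ihg

lemma SumMd.congr {d w : ℕ} {f g : ℝ → ℝ → ℝ} (h : S.SumMd d w f)
    (hfg : ∀ t x, f t x = g t x) : S.SumMd d w g := by
  have hfg' : f = g := funext fun t => funext fun x => hfg t x
  exact hfg' ▸ h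

lemma SumM.congr {w : ℕ} {f g : ℝ → ℝ → ℝ} (h : S.SumM w f)
    (hfg : ∀ t x, f t x = g t x) : S.SumM w g := by
  have hfg' : f = g := funext fun t => funext fun x => hfg t x
  exact hfg' ▸ h

lemma SumMd.smul {d w : ℕ} (r : ℝ) {f : ℝ → ℝ → ℝ} (h : S.SumMd d w f) :
    S.SumMd d w (fun t x => r * f t x) := by
  induction h with
  | zero => exact SumMd.zero.congr (by intro t x; simp)
  | of hf => exact SumMd.of (hf.smul r)
  | add hf hg ihf ihg => exact ((ihf.add ihg).congr (by intro t x; ring))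

lemma SumMd.mulM {d w d' w' : ℕ} {f g : ℝ → ℝ → ℝ} (h : S.SumMd d w f)
    (hg : S.M d' w' g) : S.SumMd (d + d') (w + w') (fun t x => f t x * g t x) := by
  induction h with
  | zero => exact SumMd.zero.congr (by intro t x; simp)
  | of hf => exact SumMd.of (hf.mul hg)
  | add h1 h2 ih1 ih2 => exact ((ih1.add ih2).congr (by intro t x; ring))

lemma M.mulSumMd {d w d' w' : ℕ} {f g : ℝ → ℝ → ℝ} (hf : S.M d w f)
    (h : S.SumMd d' w' g) : S.SumMd (d + d') (w + w') (fun t x => f t x * g t x) := by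
  induction h with
  | zero => exact SumMd.zero.congr (by intro t x; simp)
  | of hg => exact SumMd.of (hf.mul hg)
  | add h1 h2 ih1 ih2 => exact ((ih1.add ih2).congr (by intro t x; ring))

lemma M.ds {d w : ℕ} {f : ℝ → ℝ → ℝ} (h : S.M d w f) : S.SumMd d (w + 1) (S.Ds f) := by
  induction h with
  | base c =>
      exact SumMd.of (Setting.M.base (c + 1))
  | @smul r d w f hf ih =>
      have he : ∀ t x, S.Ds (fun t x => r * f t x) t x = r * S.Ds f t x :=
        S.Ds_smul r hf.sm
      exact (ih.smul r).congr (fun t x => (he t x).symm)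
  | @mul d w d' w' f g hf hg ihf ihg =>
      have he : ∀ t x, S.Ds (fun t x => f t x * g t x) t x
          = S.Ds f t x * g t x + f t x * S.Ds g t x := S.Ds_mul hf.sm hg.sm
      have h1 : S.SumMd (d + d') (w + 1 + w') (fun t x => S.Ds f t x * g t x) :=
        ihf.mulM hg
      have h2 : S.SumMd (d + d') (w + (w' + 1)) (fun t x => f t x * S.Ds g t x) :=
        hf.mulSumMd ihg
      have hw1 : w + 1 + w' = w + w' + 1 := by omega
      have hw2 : w + (w' + 1) = w + w' + 1 := by omega
      rw [hw1] at h1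
      rw [hw2] at h2
      exact (h1.add h2).congr (fun t x => (he t x).symm)

lemma SumMd.toSumM {d w : ℕ} {f : ℝ → ℝ → ℝ} (h : S.SumMd d w f) (hd : 3 ≤ d) :
    S.SumM w f := by
  induction h with
  | zero => exact SumM.zero
  | of hf => exact SumM.of hf hd
  | add h1 h2 ih1 ih2 => exact ih1.add ih2

lemma Ds_zero (t x : ℝ) : S.Ds (fun _ _ => (0 : ℝ)) t x = 0 := by
  rw [S.Ds_eq]
  rw [show px (fun _ _ => (0 : ℝ)) t x = 0 from by
    show deriv (fun _ => (0 : ℝ)) x = 0; simp]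
  ring

lemma SumM.ds {w : ℕ} {f : ℝ → ℝ → ℝ} (h : S.SumM w f) : S.SumM (w + 1) (S.Ds f) := by
  induction h with
  | zero => exact SumM.zero.congr (fun t x => (S.Ds_zero t x).symm)
  | @of d f hf hd => exact (hf.ds).toSumM hd
  | @add f g h1 h2 ih1 ih2 =>
      have he : ∀ t x, S.Ds (fun t x => f t x + g t x) t x = S.Ds f t x + S.Ds g t x :=
        S.Ds_add h1.sm h2.sm
      exact (ih1.add ih2).congr (fun t x => (he t x).symm)

lemma M.d_le_w {d w : ℕ} {f : ℝ → ℝ → ℝ} (h : S.M d w f) : d ≤ w := by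
  induction h with
  | base c => omega
  | smul r hf ih => exact ih
  | mul hf hg ihf ihg => omega

lemma M.vanish {x0 : ℝ} {d w : ℕ} {f : ℝ → ℝ → ℝ} (h : S.M d w f) :
    Odd w → (∀ c t, Even c → c + d ≤ w → S.Dk c t x0 = 0) → ∀ t, f t x0 = 0 := by
  induction h with
  | base c =>
      intro hw hvan t
      apply hvan c t _ (by omega)
      rcases hw with ⟨m, hm⟩
      exact ⟨m, by omega⟩
  | @smul r d w f hf ih =>
      intro hw hvan t
      show r * f t x0 = 0
      rw [ih hw hvan t]; ring
  | @mul d w d' w' f g hf hg ihf ihg =>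
      intro hw hvan t
      rcases Nat.even_or_odd w with hew | how
      · have how' : Odd w' := by
          rcases hw with ⟨m, hm⟩; rcases hew with ⟨a, ha⟩
          exact ⟨m - a, by omega⟩
        have : g t x0 = 0 := by
          apply ihg how' _ t
          intro c t' hc hcd
          exact hvan c t' hc (by have := hf.d_le_w; omega)
        show f t x0 * g t x0 = 0
        rw [this]; ring
      · have : f t x0 = 0 := by
          apply ihf how _ t
          intro c t' hc hcd
          exact hvan c t' hc (by have := hg.d_le_w; omega)
        show f t x0 * g t x0 = 0
        rw [this]; ring

lemma SumM.vanish {x0 : ℝ} {w : ℕ} {f : ℝ → ℝ → ℝ} (h : S.SumM w f) (hw : Odd w)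
    (hvan : ∀ c t, Even c → c + 3 ≤ w → S.Dk c t x0 = 0) : ∀ t, f t x0 = 0 := by
  induction h with
  | zero => intro t; rfl
  | @of d f hf hd =>
      intro t
      exact hf.vanish hw (fun c t' hc hcd => hvan c t' hc (by omega)) t
  | @add f g h1 h2 ih1 ih2 =>
      intro t
      show f t x0 + g t x0 = 0
      rw [ih1 t, ih2 t]; ring

end Setting

namespace Setting

variable {S : Setting}

lemma Dk_succ (m : ℕ) (t x : ℝ) : S.Dk (m + 1) t x = S.ρ t x * px (S.Dk m) t x := rfl

lemma hVk (t x : ℝ) : S.V t x = -2 * S.Dk 2 t x - S.k t x ^ 3 + S.μ * S.k t x :=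
  S.hV' t x

lemma px_V (t x : ℝ) : px S.V t x
    = -2 * px (S.Dk 2) t x - ((3 : ℕ) : ℝ) * S.k t x ^ 2 * px S.k t x
      + S.μ * px S.k t x := by
  have hVfun_t : S.V t = fun y => -2 * S.Dk 2 t y - S.k t y ^ 3 + S.μ * S.k t y :=
    funext (fun y => hVk t y)
  have hd : HasDerivAt (S.V t)
      (-2 * px (S.Dk 2) t x - ((3 : ℕ) : ℝ) * S.k t x ^ (3 - 1) * px S.k t x
        + S.μ * px S.k t x) x := by
    rw [hVfun_t]
    exact ((((S.sm_Dk 2).hdx t x).const_mul (-2)).sub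
      ((S.sm_k.hdx t x).pow 3)).add ((S.sm_k.hdx t x).const_mul S.μ)
  have := hd.deriv
  norm_num at this ⊢
  exact this

lemma DsV_eq (t x : ℝ) : S.Ds S.V t x
    = -2 * S.Dk 3 t x - 3 * (S.k t x ^ 2 * S.Dk 1 t x) + S.μ * S.Dk 1 t x := by
  rw [S.Ds_eq, px_V, Dk_succ 2, Dk_succ 0, show S.Dk 0 = S.k from rfl]
  push_cast
  ring

lemma px_DsV (t x : ℝ) : px (S.Ds S.V) t x
    = -2 * px (S.Dk 3) t x
      - 3 * (2 * S.k t x * px S.k t x * S.Dk 1 t x + S.k t x ^ 2 * px (S.Dk 1) t x)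
      + S.μ * px (S.Dk 1) t x := by
  have hfun : (S.Ds S.V) t
      = fun y => -2 * S.Dk 3 t y - 3 * (S.k t y ^ 2 * S.Dk 1 t y) + S.μ * S.Dk 1 t y :=
    funext (fun y => DsV_eq t y)
  have hk2 : HasDerivAt (fun y => S.k t y ^ 2) (2 * S.k t x * px S.k t x) x := by
    have h2 := (S.sm_k.hdx t x).pow 2
    norm_num at h2
    exact h2
  have hd : HasDerivAt ((S.Ds S.V) t)
      (-2 * px (S.Dk 3) t x
        - 3 * (2 * S.k t x * px S.k t x * S.Dk 1 t x + S.k t x ^ 2 * px (S.Dk 1) t x)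
        + S.μ * px (S.Dk 1) t x) x := by
    rw [hfun]
    have h1 : HasDerivAt (fun y => S.k t y ^ 2 * S.Dk 1 t y)
        (2 * S.k t x * px S.k t x * S.Dk 1 t x + S.k t x ^ 2 * px (S.Dk 1) t x) x :=
      hk2.mul ((S.sm_Dk 1).hdx t x)
    exact ((((S.sm_Dk 3).hdx t x).const_mul (-2)).sub (h1.const_mul 3)).add
      (((S.sm_Dk 1).hdx t x).const_mul S.μ)
  exact hd.deriv

lemma Ds2V_eq (t x : ℝ) : S.Ds (S.Ds S.V) t x
    = -2 * S.Dk 4 t x - 6 * S.k t x * S.Dk 1 t x * S.Dk 1 t x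
      - 3 * S.k t x ^ 2 * S.Dk 2 t x + S.μ * S.Dk 2 t x := by
  rw [S.Ds_eq, px_DsV, Dk_succ 3, Dk_succ 1, Dk_succ 0, show S.Dk 0 = S.k from rfl]
  ring

/-- the evolution equation for iterated arclength derivatives of curvature -/
lemma evol (j : ℕ) : ∃ p q : ℝ → ℝ → ℝ, S.SumM (j + 5) p ∧ S.SumM (j + 3) q ∧
    ∀ t x, pt (S.Dk j) t x = -2 * S.Dk (j + 4) t x + S.μ * S.Dk (j + 2) t x
      + S.T t x * S.Dk (j + 1) t x + p t x + S.μ * q t x := by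
  induction j with
  | zero =>
      refine ⟨fun t x => (-6) * (S.Dk 0 t x * (S.Dk 1 t x * S.Dk 1 t x))
        + ((-5) * (S.Dk 0 t x * (S.Dk 0 t x * S.Dk 2 t x))
          + (-1) * (S.Dk 0 t x * (S.Dk 0 t x * (S.Dk 0 t x * (S.Dk 0 t x * S.Dk 0 t x))))),
        fun t x => S.Dk 0 t x * (S.Dk 0 t x * S.Dk 0 t x), ?_, ?_, ?_⟩
      · apply SumM.add
        · exact SumM.of (((M.base 0).mul ((M.base 1).mul (M.base 1))).smul (-6)) (by omega)
        · apply SumM.add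
          · exact SumM.of (((M.base 0).mul ((M.base 0).mul (M.base 2))).smul (-5)) (by omega)
          · exact SumM.of (((M.base 0).mul ((M.base 0).mul ((M.base 0).mul
              ((M.base 0).mul (M.base 0))))).smul (-1)) (by omega)
      · exact SumM.of ((M.base 0).mul ((M.base 0).mul (M.base 0))) (by omega)
      · intro t x
        show pt S.k t x = _
        rw [S.pt_k, Ds2V_eq, hVk]
        beta_reduce
        rw [show S.Dk (0 + 4) = S.Dk 4 from rfl, show S.Dk (0 + 2) = S.Dk 2 from rfl,
          show S.Dk (0 + 1) = S.Dk 1 from rfl, show S.Dk 1 = S.Ds S.k from rfl,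
          show S.Dk 0 = S.k from rfl]
        ring
  | succ j ih =>
      obtain ⟨p, q, hp, hq, heq⟩ := ih
      refine ⟨fun t x => S.Ds p t x
          + ((-2) * (S.Dk 0 t x * (S.Dk 2 t x * S.Dk (j + 1) t x))
            + (-1) * (S.Dk 0 t x * (S.Dk 0 t x * (S.Dk 0 t x
              * (S.Dk 0 t x * S.Dk (j + 1) t x))))),
        fun t x => S.Ds q t x + S.Dk 0 t x * (S.Dk 0 t x * S.Dk (j + 1) t x),
        ?_, ?_, ?_⟩
      · apply SumM.add
        · have := hp.ds
          have hw : j + 5 + 1 = j + 1 + 5 := by omega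
          rw [hw] at this
          exact this
        · apply SumM.add
          · have hm := ((M.base (S := S) 0).mul ((M.base (S := S) 2).mul (M.base (S := S) (j + 1)))).smul (-2)
            have hw : 1 + (3 + (j + 2)) = j + 1 + 5 := by omega
            rw [hw] at hm
            exact SumM.of hm (by omega)
          · have hm := ((M.base (S := S) 0).mul ((M.base (S := S) 0).mul ((M.base (S := S) 0).mul
              ((M.base (S := S) 0).mul (M.base (S := S) (j + 1)))))).smul (-1)
            have hw : 1 + (1 + (1 + (1 + (j + 2)))) = j + 1 + 5 := by omega
            rw [hw] at hm
            exact SumM.of hm (by omega)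
      · apply SumM.add
        · have := hq.ds
          have hw : j + 3 + 1 = j + 1 + 3 := by omega
          rw [hw] at this
          exact this
        · have hm := (M.base (S := S) 0).mul ((M.base (S := S) 0).mul (M.base (S := S) (j + 1)))
          have hw : 1 + (1 + (j + 2)) = j + 1 + 3 := by omega
          rw [hw] at hm
          exact SumM.of hm (by omega)
      · intro t x
        have hcomm := S.pt_Ds (S.sm_Dk j) t x
        have hfun : pt (S.Dk j) = fun t x => -2 * S.Dk (j + 4) t x
            + S.μ * S.Dk (j + 2) t x + S.T t x * S.Dk (j + 1) t x + p t x
            + S.μ * q t x := funext fun t => funext fun x => heq t x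
        have hd : HasDerivAt ((pt (S.Dk j)) t)
            (-2 * px (S.Dk (j + 4)) t x + S.μ * px (S.Dk (j + 2)) t x
              + (px S.T t x * S.Dk (j + 1) t x + S.T t x * px (S.Dk (j + 1)) t x)
              + px p t x + S.μ * px q t x) x := by
          rw [hfun]
          exact (((((S.sm_Dk (j + 4)).hdx t x).const_mul (-2)).add
            (((S.sm_Dk (j + 2)).hdx t x).const_mul S.μ)).add
            ((S.sm_T.hdx t x).mul ((S.sm_Dk (j + 1)).hdx t x))).add
            (hp.sm.hdx t x) |>.add ((hq.sm.hdx t x).const_mul S.μ)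
        have hDspt : S.Ds (pt (S.Dk j)) t x
            = S.ρ t x * (-2 * px (S.Dk (j + 4)) t x + S.μ * px (S.Dk (j + 2)) t x
              + (px S.T t x * S.Dk (j + 1) t x + S.T t x * px (S.Dk (j + 1)) t x)
              + px p t x + S.μ * px q t x) := by
          rw [S.Ds_eq]
          rw [show px (pt (S.Dk j)) t x = _ from hd.deriv]
        show pt (S.Ds (S.Dk j)) t x = _
        rw [hcomm, hDspt, hVk]
        beta_reduce
        rw [show S.Dk (j + 1 + 4) = S.Dk (j + 4 + 1) from congrArg S.Dk (by omega),
          show S.Dk (j + 1 + 2) = S.Dk (j + 2 + 1) from congrArg S.Dk (by omega)]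
        rw [Dk_succ (j + 4), Dk_succ (j + 2), Dk_succ (j + 1)]
        rw [show S.Dk (j + 1) t x = S.ρ t x * px (S.Dk j) t x from rfl]
        rw [show S.Ds (S.Dk j) t x = S.ρ t x * px (S.Dk j) t x from rfl,
          show S.Ds p t x = S.ρ t x * px p t x from rfl,
          show S.Ds q t x = S.ρ t x * px q t x from rfl,
          show S.Ds S.T t x = S.ρ t x * px S.T t x from rfl,
          show S.Dk 0 = S.k from rfl]
        ring

end Setting

namespace Setting

variable {S : Setting}

lemma even_vanish (x0 : ℝ) (c : ℂ) (hc : ∀ t, S.γ t x0 = c) (hkz : ∀ t, S.k t x0 = 0) :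
    ∀ n t, S.Dk (2 * n) t x0 = 0 := by
  have hVT := S.endpoint_vanish x0 c hc
  have main : ∀ n m, m ≤ n + 1 → ∀ t, S.Dk (2 * m) t x0 = 0 := by
    intro n
    induction n with
    | zero =>
        intro m hm t
        interval_cases m
        · exact hkz t
        · have hV0 := (hVT t).1
          have h := hVk (S := S) t x0
          have hk' := hkz t
          rw [hV0, hk'] at h
          norm_num at h
          have h2 : S.Dk 2 t x0 = 0 := by linarith
          rw [show 2 * 1 = 2 from by norm_num]
          exact h2
    | succ n ih =>
        intro m hm t
        rcases Nat.lt_or_ge m (n + 2) with hlt | hge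
        · exact ih m (by omega) t
        · have hm2 : m = n + 2 := by omega
          subst hm2
          obtain ⟨p, q, hp, hq, heq⟩ := evol (S := S) (2 * n)
          have hptz : pt (S.Dk (2 * n)) t x0 = 0 := by
            have hfun : (fun s => S.Dk (2 * n) s x0) = fun _ => (0 : ℝ) :=
              funext fun s => ih n (by omega) s
            show deriv (fun s => S.Dk (2 * n) s x0) t = 0
            rw [hfun]
            simp
          have hT0 := (hVT t).2
          have hp0 : p t x0 = 0 := by
            refine hp.vanish ⟨n + 2, by omega⟩ ?_ t
            intro c' t' hc' hcd
            rcases hc' with ⟨a, ha⟩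
            have := ih a (by omega) t'
            rwa [show 2 * a = c' from by omega] at this
          have hq0 : q t x0 = 0 := by
            refine hq.vanish ⟨n + 1, by omega⟩ ?_ t
            intro c' t' hc' hcd
            rcases hc' with ⟨a, ha⟩
            have := ih a (by omega) t'
            rwa [show 2 * a = c' from by omega] at this
          have h2n2 : S.Dk (2 * n + 2) t x0 = 0 := by
            have := ih (n + 1) (by omega) t
            rwa [show 2 * (n + 1) = 2 * n + 2 from by omega] at this
          have heqx := heq t x0
          rw [hptz, hT0, hp0, hq0, h2n2] at heqx
          have hfin : S.Dk (2 * n + 4) t x0 = 0 := by linarith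
          rw [show 2 * (n + 2) = 2 * n + 4 from by omega]
          exact hfin
  intro n t
  exact main n n (by omega) t

lemma iter_eq (S : Setting) (n : ℕ) (t : ℝ) :
    (fun f : ℝ → ℝ => fun x => S.ρ t x * deriv f x)^[n] (S.k t) = S.Dk n t := by
  induction n with
  | zero => rfl
  | succ m ih => rw [Function.iterate_succ_apply', ih]; rfl

end Setting
end Elastic

/-- Along a smooth elastic flow of a plane curve (identifying ℝ² with ℂ) on
`[0,1]` with Navier boundary conditions `γ(t,0)=P`, `γ(t,1)=Q`,
`k(t,0)=k(t,1)=0`, all the even-order arclength derivatives of the curvature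
vanish at the endpoints: `∂_s^{2n} k(t,0) = ∂_s^{2n} k(t,1) = 0`. -/
theorem stmt_13 (μ : ℝ) (P Q : ℂ) (γ τ ν : ℝ → ℝ → ℂ) (k V T : ℝ → ℝ → ℝ)
    (hγ : ContDiff ℝ (⊤ : ℕ∞) (Function.uncurry γ))
    (hreg : ∀ t x, deriv (γ t) x ≠ 0)
    (hτ : ∀ t x, τ t x = ‖deriv (γ t) x‖⁻¹ • deriv (γ t) x)
    (hν : ∀ t x, ν t x = Complex.I * τ t x)
    (hcurv : ∀ t x, ‖deriv (γ t) x‖⁻¹ • deriv (τ t) x = k t x • ν t x)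
    (hV : ∀ t x, V t x =
      -2 * (‖deriv (γ t) x‖⁻¹ *
          deriv (fun y => ‖deriv (γ t) y‖⁻¹ * deriv (k t) y) x)
        - (k t x) ^ 3 + μ * k t x)
    (hmotion : ∀ t x, deriv (fun s => γ s x) t = V t x • ν t x + T t x • τ t x)
    (hbc0 : ∀ t, γ t 0 = P) (hbc1 : ∀ t, γ t 1 = Q)
    (hk0 : ∀ t, k t 0 = 0) (hk1 : ∀ t, k t 1 = 0) :
    ∀ (n : ℕ) (t : ℝ),
      ((fun f : ℝ → ℝ => fun x => ‖deriv (γ t) x‖⁻¹ * deriv f x)^[2 * n] (k t)) 0 = 0 ∧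
      ((fun f : ℝ → ℝ => fun x => ‖deriv (γ t) x‖⁻¹ * deriv f x)^[2 * n] (k t)) 1 = 0 := by
  have hcurv' : ∀ t x, (‖Elastic.px γ t x‖⁻¹ : ℝ) • Elastic.px τ t x
      = k t x • (Complex.I * τ t x) := by
    intro t x
    have h := hcurv t x
    rw [hν t x] at h
    exact h
  have hmotion' : ∀ t x, Elastic.pt γ t x
      = V t x • (Complex.I * τ t x) + T t x • τ t x := by
    intro t x
    have h := hmotion t x
    rw [hν t x] at h
    exact h
  let S : Elastic.Setting := ⟨μ, γ, τ, k, V, T, hγ, hreg, hτ, hcurv', hV, hmotion'⟩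
  intro n t
  have h0 := Elastic.Setting.even_vanish (S := S) 0 P hbc0 hk0 n t
  have h1 := Elastic.Setting.even_vanish (S := S) 1 Q hbc1 hk1 n t
  have hit := Elastic.Setting.iter_eq S (2 * n) t
  constructor
  · show ((fun f : ℝ → ℝ => fun x => S.ρ t x * deriv f x)^[2 * n] (S.k t)) 0 = 0
    rw [hit]
    exact h0
  · show ((fun f : ℝ → ℝ => fun x => S.ρ t x * deriv f x)^[2 * n] (S.k t)) 1 = 0
    rw [hit]
    exact h1
end
end

section
/- Suppose u_i, u_k ∈ ℝ² are unit vectors spanning ℝ², u_j is a third unit vector, and sin θ^i · u_i + sin θ^k · u_k + sin θ^j · u_j = 0 where θ^i, θ^k, θ^j are suitably defined angles with sin θ^j ≠ 0. If V_i u_i + T_i w_i = V_j u_j + T_j w_j = V_k u_k + T_k w_k for some scalars V, T, where w_l is the rotation of u_l by −π/2, then sin θ^i V_i + sin θ^k V_k + sin θ^j V_j = 0. -/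
/-- Compatibility identity at a junction: if `uᵢ, uₖ` are unit vectors spanning
ℝ² (identified with ℂ), `uⱼ` is a third unit vector with
`sin θᵢ · uᵢ + sin θₖ · uₖ + sin θⱼ · uⱼ = 0` and `sin θⱼ ≠ 0`, and the
velocity vectors `Vₗ uₗ + Tₗ wₗ` coincide at the junction, where `wₗ = −i·uₗ`
is the rotation of `uₗ` by `−π/2`, then
`sin θᵢ Vᵢ + sin θₖ Vₖ + sin θⱼ Vⱼ = 0`. -/
theorem stmt_14 (uI uK uJ : ℂ) (θI θK θJ VI VK VJ TI TK TJ : ℝ)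
    (huI : ‖uI‖ = 1) (huK : ‖uK‖ = 1) (huJ : ‖uJ‖ = 1)
    (hspan : LinearIndependent ℝ ![uI, uK])
    (hangles : Real.sin θI • uI + Real.sin θK • uK + Real.sin θJ • uJ = 0)
    (hsinJ : Real.sin θJ ≠ 0)
    (hvelIJ : VI • uI + TI • (-Complex.I * uI) = VJ • uJ + TJ • (-Complex.I * uJ))
    (hvelIK : VI • uI + TI • (-Complex.I * uI) = VK • uK + TK • (-Complex.I * uK)) :
    Real.sin θI * VI + Real.sin θK * VK + Real.sin θJ * VJ = 0 := by
  have nI : uI.re^2 + uI.im^2 = 1 := by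
    have := Complex.sq_norm uI
    rw [Complex.normSq_apply] at this
    rw [huI] at this
    nlinarith [this]
  have nK : uK.re^2 + uK.im^2 = 1 := by
    have := Complex.sq_norm uK
    rw [Complex.normSq_apply] at this
    rw [huK] at this
    nlinarith [this]
  have nJ : uJ.re^2 + uJ.im^2 = 1 := by
    have := Complex.sq_norm uJ
    rw [Complex.normSq_apply] at this
    rw [huJ] at this
    nlinarith [this]
  have A1 := congrArg Complex.re hangles
  have A2 := congrArg Complex.im hangles
  have e1J := congrArg Complex.re hvelIJ
  have e2J := congrArg Complex.im hvelIJ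
  have e1K := congrArg Complex.re hvelIK
  have e2K := congrArg Complex.im hvelIK
  simp only [Complex.add_re, Complex.add_im, Complex.smul_re, Complex.smul_im,
    Complex.mul_re, Complex.mul_im, Complex.neg_re, Complex.neg_im, Complex.I_re,
    Complex.I_im, Complex.zero_re, Complex.zero_im, smul_eq_mul] at A1 A2 e1J e2J e1K e2K
  set a := VI * uI.re + TI * uI.im
  set b := VI * uI.im - TI * uI.re
  linear_combination a*A1 + b*A2 - Real.sin θI*VI*nI - Real.sin θK*VK*nK - Real.sin θJ*VJ*nJ - Real.sin θJ*uJ.re*e1J - Real.sin θJ*uJ.im*e2J - Real.sin θK*uK.re*e1K - Real.sin θK*uK.im*e2K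
end
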